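/- Fix n ≥ 0. Let g be the real vector space with basis {X_{4k+1}, X_{4k+2}, X_{4k+3}, X_{4k+4} : 0 ≤ k ≤ n} ∪ {Z_1, Z_2}, equipped with the alternating bilinear bracket whose only nonzero brackets among basis elements are, for each 0 ≤ k ≤ n: [X_{4k+1}, X_{4k+2}] = −Z_1/2, [X_{4k+1}, X_{4k+4}] = −Z_2/2, [X_{4k+2}, X_{4k+3}] = −Z_2/2 (and the brackets obtained by antisymmetry). Then: (1) this bracket satisfies the Jacobi identity and g is a 2-step nilpotent Lie algebra with Z_1, Z_2 central; (2) the linear map J determined by JX_{4k+1} = X_{4k+2}, JX_{4k+2} = −X_{4k+1}, JX_{4k+3} = −X_{4k+4}, JX_{4k+4} = X_{4k+3}, JZ_1 = −Z_2, JZ_2 = Z_1 is an abelian complex structure; (3) setting in g_ℂ the elements W = (Z_1 + iZ_2)/2, T_{2k+1} = (X_{4k+1} − iX_{4k+2})/2, T_{2k+2} = (X_{4k+3} + iX_{4k+4})/2 together with their conjugates W̄ = (Z_1 − iZ_2)/2, T̄_{2k+1} = (X_{4k+1} + iX_{4k+2})/2, T̄_{2k+2} = (X_{4k+3} − iX_{4k+4})/2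 (forming a ℂ-basis of g_ℂ), and letting ρ : g_ℂ → ℂ be the functional with ρ(W) = 1 and ρ = 0 on all other basis elements, the pairing span_ℂ{T_1, …, T_{2n+2}} × span_ℂ{T̄_1, …, T̄_{2n+2}} → ℂ given by (T, S) ↦ ρ([T, S]) is non-degenerate. -/

import Mathlib

/-! **Statement 15.** The algebra `P` of Example 4: it is a 2-step nilpotent Lie
algebra with `Z_1, Z_2` central, it carries an abelian complex structure `J`, and the
pairing induced by `dρ` on the complexification is non-degenerate. -/

namespace ExampleFour

noncomputable section

/-- The underlying vector space over a field `K`: for each `0 ≤ k ≤ n` the four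
coordinates of `X_{4k+1}, X_{4k+2}, X_{4k+3}, X_{4k+4}`, plus those of `Z_1, Z_2`. -/
abbrev G (K : Type) (n : ℕ) := (Fin (n + 1) → K × K × K × K) × K × K

variable {K : Type} [Field K] {n : ℕ}

/-- The standard basis of `K × K × K × K`. -/
def e : Fin 4 → K × K × K × K := ![(1, 0, 0, 0), (0, 1, 0, 0), (0, 0, 1, 0), (0, 0, 0, 1)]

/-- The basis vector `X_{4k+1+i}` (for `i : Fin 4`). -/
def X (k : Fin (n + 1)) (i : Fin 4) : G K n := (Pi.single k (e i), 0, 0)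

/-- The basis vector `Z_1`. -/
def Z1 : G K n := (0, 1, 0)

/-- The basis vector `Z_2`. -/
def Z2 : G K n := (0, 0, 1)

/-- Coefficients of `Z_1` in the brackets `[X_{4k+1+i}, X_{4k+1+j}]`:
`[X_{4k+1}, X_{4k+2}] = -Z_1/2`. -/
def c (K : Type) [Field K] : Matrix (Fin 4) (Fin 4) K :=
  !![0, -(1 / 2), 0, 0; 1 / 2, 0, 0, 0; 0, 0, 0, 0; 0, 0, 0, 0]

/-- Coefficients of `Z_2` in the brackets `[X_{4k+1+i}, X_{4k+1+j}]`:
`[X_{4k+1}, X_{4k+4}] = -Z_2/2`, `[X_{4k+2}, X_{4k+3}] = -Z_2/2`. -/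
def d (K : Type) [Field K] : Matrix (Fin 4) (Fin 4) K :=
  !![0, 0, 0, -(1 / 2); 0, 0, -(1 / 2), 0; 0, 1 / 2, 0, 0; 1 / 2, 0, 0, 0]

/-- `br` is the (necessarily unique) `K`-bilinear bracket whose only nonzero values on
basis elements are, for each `k`: `[X_{4k+1}, X_{4k+2}] = -Z_1/2`,
`[X_{4k+1}, X_{4k+4}] = -Z_2/2`, `[X_{4k+2}, X_{4k+3}] = -Z_2/2` (and the brackets
obtained by antisymmetry). -/
def IsExampleFourBracket (br : G K n →ₗ[K] G K n →ₗ[K] G K n) : Prop :=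
  (∀ (k l : Fin (n + 1)) (i j : Fin 4),
    br (X k i) (X l j) = if k = l then c K i j • Z1 + d K i j • Z2 else 0) ∧
  (∀ (k : Fin (n + 1)) (i : Fin 4), br (X k i) Z1 = 0 ∧ br Z1 (X k i) = 0 ∧
    br (X k i) Z2 = 0 ∧ br Z2 (X k i) = 0) ∧
  (br (Z1 : G K n) Z1 = 0 ∧ br (Z1 : G K n) Z2 = 0 ∧ br (Z2 : G K n) Z1 = 0 ∧
    br (Z2 : G K n) Z2 = 0)

/-- `W = (Z_1 + iZ_2)/2` in the complexification. -/
def W : G ℂ n := (0, 1 / 2, Complex.I / 2)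
/-- `W̄ = (Z_1 - iZ_2)/2`. -/
def Wb : G ℂ n := (0, 1 / 2, -(Complex.I / 2))
/-- `T_{2k+1} = (X_{4k+1} - iX_{4k+2})/2`. -/
def Todd (k : Fin (n + 1)) : G ℂ n := (Pi.single k (1 / 2, -(Complex.I / 2), 0, 0), 0, 0)
/-- `T_{2k+2} = (X_{4k+3} + iX_{4k+4})/2`. -/
def Teven (k : Fin (n + 1)) : G ℂ n := (Pi.single k (0, 0, 1 / 2, Complex.I / 2), 0, 0)
/-- `T̄_{2k+1} = (X_{4k+1} + iX_{4k+2})/2`. -/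
def Tbodd (k : Fin (n + 1)) : G ℂ n := (Pi.single k (1 / 2, Complex.I / 2, 0, 0), 0, 0)
/-- `T̄_{2k+2} = (X_{4k+3} - iX_{4k+4})/2`. -/
def Tbeven (k : Fin (n + 1)) : G ℂ n := (Pi.single k (0, 0, 1 / 2, -(Complex.I / 2)), 0, 0)

/-! The defining relations force `[u, v] = ω₁(u, v) Z₁ + ω₂(u, v) Z₂` for two explicit
alternating forms `ω₁ = bracketZ1`, `ω₂ = bracketZ2` in the `X`-coordinates, and both forms are
`J`-invariant; (1) and (2) are read off this formula. For (3), `ρ Z₁ = 1` and `ρ Z₂ = -i`, so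
`ρ [u, v] = ω₁(u, v) - i ω₂(u, v)`. For `u = ∑ₖ 2aₖ T_{2k+1} + 2bₖ T_{2k+2}` and
`v = ∑ₖ 2pₖ T̄_{2k+1} + 2qₖ T̄_{2k+2}` this is `∑ₖ (aₖ qₖ + bₖ pₖ - i aₖ pₖ)`, a form whose
matrix is block diagonal with the invertible blocks `!![-i, 1; 1, 0]`. -/

def coord (u : G K n) (k : Fin (n + 1)) : Fin 4 → K :=
  ![(u.1 k).1, (u.1 k).2.1, (u.1 k).2.2.1, (u.1 k).2.2.2]

theorem eq_sum_X_add_Z (u : G K n) :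
    u = (∑ k, ∑ i, coord u k i • X k i) + u.2.1 • Z1 + u.2.2 • Z2 := by
  refine Prod.ext (funext fun l => ?_) (Prod.ext ?_ ?_)
  · simp [X, Z1, Z2, coord, e, Fin.sum_univ_four, Prod.fst_sum, Finset.sum_apply,
      Pi.single_apply, Finset.sum_add_distrib]
  all_goals simp [X, Z1, Z2, Prod.snd_sum]

theorem map_eq_sum_X_add_Z {M : Type*} [AddCommMonoid M] [Module K M] (f : G K n →ₗ[K] M)
    (u : G K n) :
    f u = (∑ k, ∑ i, coord u k i • f (X k i)) + u.2.1 • f Z1 + u.2.2 • f Z2 := by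
  conv_lhs => rw [eq_sum_X_add_Z u]
  simp only [map_add, map_sum, map_smul]

def bracketZ1 (u v : G K n) : K :=
  ∑ k, ((u.1 k).2.1 * (v.1 k).1 - (u.1 k).1 * (v.1 k).2.1) / 2

def bracketZ2 (u v : G K n) : K :=
  ∑ k, ((u.1 k).2.2.1 * (v.1 k).2.1 + (u.1 k).2.2.2 * (v.1 k).1
    - (u.1 k).1 * (v.1 k).2.2.2 - (u.1 k).2.1 * (v.1 k).2.2.1) / 2

namespace IsExampleFourBracket

variable {br : G K n →ₗ[K] G K n →ₗ[K] G K n} (hbr : IsExampleFourBracket br)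
include hbr

theorem apply_X_left (k : Fin (n + 1)) (i : Fin 4) (v : G K n) :
    br (X k i) v = (∑ j, coord v k j * c K i j) • Z1 + (∑ j, coord v k j * d K i j) • Z2 := by
  obtain ⟨hXX, hXZ, -⟩ := hbr
  rw [map_eq_sum_X_add_Z (br (X k i)) v]
  simp [hXX, hXZ, smul_ite, Finset.sum_smul, smul_smul, Finset.sum_add_distrib]

theorem apply_Z1_left (v : G K n) : br Z1 v = 0 := by
  rw [map_eq_sum_X_add_Z (br Z1) v]
  simp [hbr.2.1, hbr.2.2]

theorem apply_Z2_left (v : G K n) : br Z2 v = 0 := by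
  rw [map_eq_sum_X_add_Z (br Z2) v]
  simp [hbr.2.1, hbr.2.2]

theorem apply_eq (u v : G K n) : br u v = (0, bracketZ1 u v, bracketZ2 u v) := by
  rw [map_eq_sum_X_add_Z br u]
  simp only [LinearMap.add_apply, LinearMap.smul_apply, LinearMap.sum_apply, hbr.apply_X_left,
    hbr.apply_Z1_left, hbr.apply_Z2_left, smul_zero, add_zero]
  refine Prod.ext ?_ (Prod.ext ?_ ?_)
  all_goals
    simp only [Prod.fst_sum, Prod.snd_sum, bracketZ1, bracketZ2]
    simp only [coord, c, d, Z1, Z2, one_div, Matrix.of_apply, Matrix.cons_val',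
      Matrix.cons_val_fin_one, Fin.sum_univ_four, Fin.isValue, Matrix.cons_val_zero,
      Matrix.cons_val_one, Matrix.cons_val, Prod.smul_mk, smul_zero, smul_eq_mul, mul_one, mul_zero,
      Prod.mk_add_mk, add_zero, zero_add, mul_neg, Finset.sum_const_zero]
  all_goals exact Finset.sum_congr rfl fun k _ => by ring

theorem apply_eq_zero_of_fst_eq_zero_left {u : G K n} (hu : u.1 = 0) (v : G K n) :
    br u v = 0 := by
  simp [hbr.apply_eq, bracketZ1, bracketZ2, hu]

theorem apply_eq_zero_of_fst_eq_zero_right {v : G K n} (hv : v.1 = 0) (u : G K n) :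
    br u v = 0 := by
  simp [hbr.apply_eq, bracketZ1, bracketZ2, hv]

theorem apply_apply_left (u v w : G K n) : br (br u v) w = 0 :=
  hbr.apply_eq_zero_of_fst_eq_zero_left (by rw [hbr.apply_eq]) w

theorem apply_self (u : G K n) : br u u = 0 := by
  simp only [hbr.apply_eq, bracketZ1, bracketZ2, mul_comm, sub_self, add_sub_cancel_right,
    zero_div, Finset.sum_const_zero]
  rfl

end IsExampleFourBracket

structure IsExampleFourComplexStructure (J : G K n →ₗ[K] G K n) : Prop where
  apply_X0 : ∀ k, J (X k 0) = X k 1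
  apply_X1 : ∀ k, J (X k 1) = -X k 0
  apply_X2 : ∀ k, J (X k 2) = -X k 3
  apply_X3 : ∀ k, J (X k 3) = X k 2
  apply_Z1 : J Z1 = -Z2
  apply_Z2 : J Z2 = Z1

namespace IsExampleFourComplexStructure

variable {J : G K n →ₗ[K] G K n} (hJ : IsExampleFourComplexStructure J)
include hJ

theorem apply_eq (u : G K n) :
    J u = (fun k => (-(u.1 k).2.1, (u.1 k).1, (u.1 k).2.2.2, -(u.1 k).2.2.1), u.2.2, -u.2.1) := by
  rw [map_eq_sum_X_add_Z J u]
  simp only [Fin.sum_univ_four, hJ.apply_X0, hJ.apply_X1, hJ.apply_X2, hJ.apply_X3, hJ.apply_Z1,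
    hJ.apply_Z2]
  refine Prod.ext (funext fun l => ?_) (Prod.ext ?_ ?_)
  · simp [X, Z1, Z2, coord, e, Prod.fst_sum, Finset.sum_apply, Pi.single_apply,
      Finset.sum_add_distrib]
  all_goals simp [X, Z1, Z2, Prod.snd_sum]

theorem apply_apply (u : G K n) : J (J u) = -u := by
  rw [hJ.apply_eq, hJ.apply_eq]
  rfl

end IsExampleFourComplexStructure

theorem IsExampleFourBracket.apply_map_map {br : G K n →ₗ[K] G K n →ₗ[K] G K n}
    (hbr : IsExampleFourBracket br) {J : G K n →ₗ[K] G K n} (hJ : IsExampleFourComplexStructure J)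
    (u v : G K n) : br (J u) (J v) = br u v := by
  simp only [hbr.apply_eq, hJ.apply_eq, bracketZ1, bracketZ2]
  congr 2 <;> exact Finset.sum_congr rfl fun _ _ => by ring

section Complexification

open Complex

theorem apply_zero_mk_eq {ρ : G ℂ n →ₗ[ℂ] ℂ} (hρW : ρ W = 1) (hρWb : ρ Wb = 0) (a b : ℂ) :
    ρ (0, a, b) = a - I * b := by
  have hab : ((0, a, b) : G ℂ n) = (a - I * b) • W + (a + I * b) • Wb := by
    refine Prod.ext (by simp [W, Wb]) (Prod.ext ?_ ?_)
    all_goals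
      simp only [W, Wb, one_div, Prod.smul_mk, smul_zero, smul_eq_mul, mul_neg, Prod.mk_add_mk,
        add_zero]
    · ring
    · linear_combination b * I_sq
  rw [hab, map_add, map_smul, map_smul, hρW, hρWb, smul_eq_mul, mul_one, smul_zero, add_zero]

def mkT : ((Fin (n + 1) → ℂ) × (Fin (n + 1) → ℂ)) →ₗ[ℂ] G ℂ n where
  toFun ab := (fun k => (ab.1 k, -(I * ab.1 k), ab.2 k, I * ab.2 k), 0, 0)
  map_add' _ _ := by
    ext <;> simp only [Prod.fst_add, Prod.snd_add, Pi.add_apply, Prod.mk_add_mk, add_zero] <;> ring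
  map_smul' _ _ := by
    ext <;> simp only [Prod.smul_fst, Prod.smul_snd, Pi.smul_apply, smul_eq_mul, RingHom.id_apply,
      Prod.smul_mk, mul_zero, mul_neg] <;> ring

def mkTb : ((Fin (n + 1) → ℂ) × (Fin (n + 1) → ℂ)) →ₗ[ℂ] G ℂ n where
  toFun pq := (fun k => (pq.1 k, I * pq.1 k, pq.2 k, -(I * pq.2 k)), 0, 0)
  map_add' _ _ := by
    ext <;> simp only [Prod.fst_add, Prod.snd_add, Pi.add_apply, Prod.mk_add_mk, add_zero] <;> ring
  map_smul' _ _ := by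
    ext <;> simp only [Prod.smul_fst, Prod.smul_snd, Pi.smul_apply, smul_eq_mul, RingHom.id_apply,
      Prod.smul_mk, mul_zero, mul_neg] <;> ring

theorem Todd_eq_mkT (l : Fin (n + 1)) : Todd l = mkT (Pi.single l (1 / 2), 0) := by
  refine Prod.ext (funext fun k => ?_) rfl
  by_cases hk : k = l <;> simp [Todd, mkT, hk, Prod.ext_iff, div_eq_mul_inv]

theorem Teven_eq_mkT (l : Fin (n + 1)) : Teven l = mkT (0, Pi.single l (1 / 2)) := by
  refine Prod.ext (funext fun k => ?_) rfl
  by_cases hk : k = l <;> simp [Teven, mkT, hk, Prod.ext_iff, div_eq_mul_inv]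

theorem Tbodd_eq_mkTb (l : Fin (n + 1)) : Tbodd l = mkTb (Pi.single l (1 / 2), 0) := by
  refine Prod.ext (funext fun k => ?_) rfl
  by_cases hk : k = l <;> simp [Tbodd, mkTb, hk, Prod.ext_iff, div_eq_mul_inv]

theorem Tbeven_eq_mkTb (l : Fin (n + 1)) : Tbeven l = mkTb (0, Pi.single l (1 / 2)) := by
  refine Prod.ext (funext fun k => ?_) rfl
  by_cases hk : k = l <;> simp [Tbeven, mkTb, hk, Prod.ext_iff, div_eq_mul_inv]

theorem span_T_le_range_mkT :
    Submodule.span ℂ (Set.range (Todd (n := n)) ∪ Set.range Teven) ≤ LinearMap.range mkT :=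
  Submodule.span_le.2 <| Set.union_subset
    (Set.range_subset_iff.2 fun l => ⟨_, (Todd_eq_mkT l).symm⟩)
    (Set.range_subset_iff.2 fun l => ⟨_, (Teven_eq_mkT l).symm⟩)

theorem span_Tb_le_range_mkTb :
    Submodule.span ℂ (Set.range (Tbodd (n := n)) ∪ Set.range Tbeven) ≤ LinearMap.range mkTb :=
  Submodule.span_le.2 <| Set.union_subset
    (Set.range_subset_iff.2 fun l => ⟨_, (Tbodd_eq_mkTb l).symm⟩)
    (Set.range_subset_iff.2 fun l => ⟨_, (Tbeven_eq_mkTb l).symm⟩)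

section Pairing

variable {brc : G ℂ n →ₗ[ℂ] G ℂ n →ₗ[ℂ] G ℂ n} (hbrc : IsExampleFourBracket brc)
  {ρ : G ℂ n →ₗ[ℂ] ℂ} (hρW : ρ W = 1) (hρWb : ρ Wb = 0)
include hbrc hρW hρWb

theorem apply_apply_mkT_mkTb (a b p q : Fin (n + 1) → ℂ) :
    ρ (brc (mkT (a, b)) (mkTb (p, q))) = ∑ k, (a k * q k + b k * p k - I * a k * p k) := by
  rw [hbrc.apply_eq, apply_zero_mk_eq hρW hρWb]
  simp only [bracketZ1, bracketZ2, Finset.mul_sum, ← Finset.sum_sub_distrib]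
  refine Finset.sum_congr rfl fun k _ => ?_
  simp only [mkT, mkTb, LinearMap.coe_mk, AddHom.coe_mk]
  linear_combination (-(b k * p k + a k * q k)) * I_sq

theorem rho_bracket_nondegenerate_left :
    ∀ u ∈ Submodule.span ℂ (Set.range (Todd (n := n)) ∪ Set.range Teven),
      (∀ v ∈ Submodule.span ℂ (Set.range (Tbodd (n := n)) ∪ Set.range Tbeven),
        ρ (brc u v) = 0) → u = 0 := by
  intro u hu h
  obtain ⟨⟨a, b⟩, rfl⟩ := span_T_le_range_mkT hu
  have ha : ∀ l, a l = 0 := fun l => by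
    have hl := h _ (Submodule.subset_span (Or.inr ⟨l, rfl⟩))
    simpa [Tbeven_eq_mkTb, apply_apply_mkT_mkTb hbrc hρW hρWb, Pi.single_apply] using hl
  have hb : ∀ l, b l = 0 := fun l => by
    have hl := h _ (Submodule.subset_span (Or.inl ⟨l, rfl⟩))
    simpa [Tbodd_eq_mkTb, apply_apply_mkT_mkTb hbrc hρW hρWb, Pi.single_apply, ha] using hl
  obtain rfl : a = 0 := funext ha
  obtain rfl : b = 0 := funext hb
  rw [Prod.mk_zero_zero, map_zero]

theorem rho_bracket_nondegenerate_right :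
    ∀ v ∈ Submodule.span ℂ (Set.range (Tbodd (n := n)) ∪ Set.range Tbeven),
      (∀ u ∈ Submodule.span ℂ (Set.range (Todd (n := n)) ∪ Set.range Teven),
        ρ (brc u v) = 0) → v = 0 := by
  intro v hv h
  obtain ⟨⟨p, q⟩, rfl⟩ := span_Tb_le_range_mkTb hv
  have hp : ∀ l, p l = 0 := fun l => by
    have hl := h _ (Submodule.subset_span (Or.inr ⟨l, rfl⟩))
    simpa [Teven_eq_mkT, apply_apply_mkT_mkTb hbrc hρW hρWb, Pi.single_apply] using hl
  have hq : ∀ l, q l = 0 := fun l => by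
    have hl := h _ (Submodule.subset_span (Or.inl ⟨l, rfl⟩))
    simpa [Todd_eq_mkT, apply_apply_mkT_mkTb hbrc hρW hρWb, Pi.single_apply, hp] using hl
  obtain rfl : p = 0 := funext hp
  obtain rfl : q = 0 := funext hq
  rw [Prod.mk_zero_zero, map_zero]

end Pairing

end Complexification

theorem exampleFour_main_general
    (n : ℕ)
    -- the real Lie bracket
    (br : G ℝ n →ₗ[ℝ] G ℝ n →ₗ[ℝ] G ℝ n) (hbr : IsExampleFourBracket br)
    -- the complex structure `J`
    (J : G ℝ n →ₗ[ℝ] G ℝ n)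
    (hJ1 : ∀ k, J (X k 0) = X k 1) (hJ2 : ∀ k, J (X k 1) = -X k 0)
    (hJ3 : ∀ k, J (X k 2) = -X k 3) (hJ4 : ∀ k, J (X k 3) = X k 2)
    (hJZ1 : J (Z1 : G ℝ n) = -Z2) (hJZ2 : J (Z2 : G ℝ n) = Z1)
    -- the ℂ-bilinear extension of the bracket to `g_ℂ`
    (brc : G ℂ n →ₗ[ℂ] G ℂ n →ₗ[ℂ] G ℂ n) (hbrc : IsExampleFourBracket brc)
    -- the functional `ρ` with `ρ W = 1`, vanishing on the other basis elements
    (ρ : G ℂ n →ₗ[ℂ] ℂ)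
    (hρW : ρ W = 1) (hρWb : ρ Wb = 0) :
    -- (1) `g` is a 2-step nilpotent Lie algebra with `Z_1, Z_2` central
    ((∀ u : G ℝ n, br u u = 0) ∧
     (∀ u v w : G ℝ n, br (br u v) w + br (br v w) u + br (br w u) v = 0) ∧
     (∀ u v w : G ℝ n, br (br u v) w = 0) ∧
     (∀ v : G ℝ n, br Z1 v = 0 ∧ br v Z1 = 0 ∧ br Z2 v = 0 ∧ br v Z2 = 0)) ∧
    -- (2) `J` is an abelian complex structure
    ((∀ u : G ℝ n, J (J u) = -u) ∧
     (∀ u v : G ℝ n, br (J u) (J v) = br u v)) ∧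
    -- (3) the pairing `(T, S) ↦ ρ ⁅T, S⁆` between `span {T_1, …, T_{2n+2}}` and
    --     `span {T̄_1, …, T̄_{2n+2}}` is non-degenerate
    ((∀ u ∈ Submodule.span ℂ (Set.range (Todd (n := n)) ∪ Set.range Teven),
        (∀ v ∈ Submodule.span ℂ (Set.range (Tbodd (n := n)) ∪ Set.range Tbeven),
          ρ (brc u v) = 0) → u = 0) ∧
     (∀ v ∈ Submodule.span ℂ (Set.range (Tbodd (n := n)) ∪ Set.range Tbeven),
        (∀ u ∈ Submodule.span ℂ (Set.range (Todd (n := n)) ∪ Set.range Teven),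
          ρ (brc u v) = 0) → v = 0)) := by
  have hJ : IsExampleFourComplexStructure J := ⟨hJ1, hJ2, hJ3, hJ4, hJZ1, hJZ2⟩
  refine ⟨⟨hbr.apply_self, fun u v w => ?_, hbr.apply_apply_left, fun v => ?_⟩,
    ⟨hJ.apply_apply, hbr.apply_map_map hJ⟩,
    rho_bracket_nondegenerate_left hbrc hρW hρWb, rho_bracket_nondegenerate_right hbrc hρW hρWb⟩
  · simp only [hbr.apply_apply_left, add_zero]
  · exact ⟨hbr.apply_Z1_left v, hbr.apply_eq_zero_of_fst_eq_zero_right rfl v,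
      hbr.apply_Z2_left v, hbr.apply_eq_zero_of_fst_eq_zero_right rfl v⟩

/-- Main statement for the algebra of Example 4. -/
theorem exampleFour_main
    (n : ℕ)
    -- the real Lie bracket
    (br : G ℝ n →ₗ[ℝ] G ℝ n →ₗ[ℝ] G ℝ n) (hbr : IsExampleFourBracket br)
    -- the complex structure `J`
    (J : G ℝ n →ₗ[ℝ] G ℝ n)
    (hJ1 : ∀ k, J (X k 0) = X k 1) (hJ2 : ∀ k, J (X k 1) = -X k 0)
    (hJ3 : ∀ k, J (X k 2) = -X k 3) (hJ4 : ∀ k, J (X k 3) = X k 2)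
    (hJZ1 : J (Z1 : G ℝ n) = -Z2) (hJZ2 : J (Z2 : G ℝ n) = Z1)
    -- the ℂ-bilinear extension of the bracket to `g_ℂ`
    (brc : G ℂ n →ₗ[ℂ] G ℂ n →ₗ[ℂ] G ℂ n) (hbrc : IsExampleFourBracket brc)
    -- the functional `ρ` with `ρ W = 1`, vanishing on the other basis elements
    (ρ : G ℂ n →ₗ[ℂ] ℂ)
    (hρW : ρ W = 1) (hρWb : ρ Wb = 0)
    (hρT : ∀ k, ρ (Todd k) = 0 ∧ ρ (Teven k) = 0 ∧ ρ (Tbodd k) = 0 ∧ ρ (Tbeven k) = 0) :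
    -- (1) `g` is a 2-step nilpotent Lie algebra with `Z_1, Z_2` central
    ((∀ u : G ℝ n, br u u = 0) ∧
     (∀ u v w : G ℝ n, br (br u v) w + br (br v w) u + br (br w u) v = 0) ∧
     (∀ u v w : G ℝ n, br (br u v) w = 0) ∧
     (∀ v : G ℝ n, br Z1 v = 0 ∧ br v Z1 = 0 ∧ br Z2 v = 0 ∧ br v Z2 = 0)) ∧
    -- (2) `J` is an abelian complex structure
    ((∀ u : G ℝ n, J (J u) = -u) ∧
     (∀ u v : G ℝ n, br (J u) (J v) = br u v)) ∧
    -- (3) the pairing `(T, S) ↦ ρ ⁅T, S⁆` between `span {T_1, …, T_{2n+2}}` and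
    --     `span {T̄_1, …, T̄_{2n+2}}` is non-degenerate
    ((∀ u ∈ Submodule.span ℂ (Set.range (Todd (n := n)) ∪ Set.range Teven),
        (∀ v ∈ Submodule.span ℂ (Set.range (Tbodd (n := n)) ∪ Set.range Tbeven),
          ρ (brc u v) = 0) → u = 0) ∧
     (∀ v ∈ Submodule.span ℂ (Set.range (Tbodd (n := n)) ∪ Set.range Tbeven),
        (∀ u ∈ Submodule.span ℂ (Set.range (Todd (n := n)) ∪ Set.range Teven),
          ρ (brc u v) = 0) → v = 0)) :=
  exampleFour_main_general n br hbr J hJ1 hJ2 hJ3 hJ4 hJZ1 hJZ2 brc hbrc ρ hρW hρWb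

end

end ExampleFour
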